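/- Static hopset stretch/hopbound lemma: let G = (V, E, w) be a weighted undirected graph, k ≥ 1, 0 < δ ≤ 1/(8k), and let V = A₀ ⊇ A₁ ⊇ ... ⊇ A_k = ∅ be nested vertex sets. For u ∈ A_i \ A_{i+1} let p(u) be a closest vertex of A_{i+1} to u and B(u) = { v ∈ A_i : d_G(u, v) < d_G(u, A_{i+1}) }; let H contain the edge (u, v) with weight d_G(u, v) for every such u and every v ∈ B(u) ∪ {p(u)}. Then for every pair x, y ∈ V and every 0 ≤ i ≤ k − 1, either (1) d_{G ∪ H}^{((3/δ)^i)}(x, y) ≤ (1 + 8δi)·d_G(x, y), or (2) there exists z ∈ A_{i+1} with d_{G ∪ H}^{((3/δ)^i)}(x, z) ≤ 2·d_G(x, y). Consequently, since A_k = ∅, taking i = k − 1 gives d_{G ∪ H}^{((3/δ)^{k−1})}(x, y) ≤ (1 + 8δ(k−1))·d_G(x, y) for all pairs x, y. -/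

import Mathlib

open scoped ENNReal BigOperators Classical

noncomputable def hdist {V : Type*} [Fintype V] [DecidableEq V]
    (w : V → V → ℝ≥0∞) : ℕ → V → V → ℝ≥0∞
  | 0, u, v => if u = v then 0 else ⊤
  | h + 1, u, v => min (hdist w h u v) (⨅ x, w u x + hdist w h x v)

noncomputable def gdist {V : Type*} [Fintype V] [DecidableEq V]
    (w : V → V → ℝ≥0∞) (u v : V) : ℝ≥0∞ :=
  ⨅ h : ℕ, hdist w h u v

/-!
Induction on `i`. Cut a shortest `x`–`y` path greedily into `J` segments, each of weight at most
`δ·d(x, y)` or a single edge, such that any two consecutive segments weigh more than `δ·d(x, y)`;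
then `J ≤ 2/δ + 1`, so `J + 2` blocks of `⌈(3/δ)^i⌉` hops fit into `⌈(3/δ)^(i+1)⌉` hops.
If alternative (1) of level `i` holds on every segment, concatenation gives (1) at level `i + 1`.
Otherwise let `a` and `b` be the first and the last segment where it fails. Both are light, so
alternative (2) gives `z₁, z₂ ∈ A (i+1)` within `2δ·d(x, y)` of the start of `a` and of the end of
`b`. Either `z₂` lies in the bunch of `z₁`, and the hopset edge `z₁z₂` bridges the segments `a..b`
at an extra cost of `8δ·d(x, y)`, or some `z ∈ A (i+2)` (the pivot of `z₁`, or `z₁` itself) is at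
most `d(z₁, z₂)` from `z₁`, and the route `x ⇝ z₁ → z` has weight at most `2·d(x, y)`.
-/

open Finset

section HopDistance

variable {V : Type*} [Fintype V] [DecidableEq V] (w : V → V → ℝ≥0∞)

lemma hdist_antitone : Antitone (hdist w) :=
  antitone_nat_of_succ_le fun _ _ _ => min_le_left _ _

lemma hdist_self (h : ℕ) (u : V) : hdist w h u u = 0 :=
  le_antisymm ((hdist_antitone w h.zero_le u u).trans (by simp [hdist])) bot_le

lemma hdist_one_le (u v : V) : hdist w 1 u v ≤ w u v :=
  (min_le_right _ _).trans ((iInf_le _ v).trans (by simp [hdist]))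

lemma hdist_add_le (h₁ h₂ : ℕ) (u m v : V) :
    hdist w (h₁ + h₂) u v ≤ hdist w h₁ u m + hdist w h₂ m v := by
  induction h₁ generalizing u with
  | zero => by_cases hum : u = m <;> simp [hdist, hum]
  | succ n ih =>
    rw [show n + 1 + h₂ = n + h₂ + 1 by omega, hdist, hdist, ← min_add_add_right,
      ENNReal.iInf_add]
    refine min_le_min (ih u) (iInf_mono fun x => ?_)
    rw [add_assoc]
    gcongr
    exact ih x

variable {w} in
lemma hdist_add_le_of_le {h₁ h₂ : ℕ} {u m v : V} {a b : ℝ≥0∞} (hum : hdist w h₁ u m ≤ a)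
    (hmv : hdist w h₂ m v ≤ b) : hdist w (h₁ + h₂) u v ≤ a + b :=
  (hdist_add_le w h₁ h₂ u m v).trans (add_le_add hum hmv)

lemma hdist_le_sum_of_chain (g : ℕ → V) (b : ℕ → ℝ≥0∞) (h : ℕ) {a J : ℕ} (haJ : a ≤ J)
    (hg : ∀ j, a ≤ j → j < J → hdist w h (g j) (g (j + 1)) ≤ b j) :
    hdist w ((J - a) * h) (g a) (g J) ≤ ∑ j ∈ Ico a J, b j := by
  induction J, haJ using Nat.le_induction with
  | base => simp [hdist_self]
  | succ J haJ ih =>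
    rw [show (J + 1 - a) * h = (J - a) * h + h by rw [Nat.sub_add_comm haJ, Nat.succ_mul],
      sum_Ico_succ_top haJ]
    exact hdist_add_le_of_le (ih fun j hj hjJ => hg j hj (by omega)) (hg J haJ J.lt_succ_self)

lemma hdist_le_sum_Ico (f : ℕ → V) {a b : ℕ} (hab : a ≤ b) :
    hdist w (b - a) (f a) (f b) ≤ ∑ j ∈ Ico a b, w (f j) (f (j + 1)) := by
  simpa using hdist_le_sum_of_chain w f (fun j => w (f j) (f (j + 1))) 1 hab
    fun j _ _ => hdist_one_le w _ _

variable {w}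

lemma hdist_le_swap (hsym : ∀ u v, w u v = w v u) (h : ℕ) (u v : V) :
    hdist w h u v ≤ hdist w h v u := by
  induction h generalizing u v with
  | zero => by_cases huv : u = v <;> simp [hdist, huv, eq_comm]
  | succ h ih =>
    refine le_min ((min_le_left _ _).trans (ih u v)) (le_iInf fun x => ?_)
    calc hdist w (h + 1) u v ≤ hdist w h u x + hdist w 1 x v := hdist_add_le w h 1 u x v
      _ ≤ hdist w h x u + w x v := add_le_add (ih u x) (hdist_one_le w x v)
      _ = w v x + hdist w h x u := by rw [hsym, add_comm]

lemma hdist_comm (hsym : ∀ u v, w u v = w v u) (h : ℕ) (u v : V) :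
    hdist w h u v = hdist w h v u :=
  le_antisymm (hdist_le_swap hsym h u v) (hdist_le_swap hsym h v u)

variable (w)

lemma gdist_le_hdist (h : ℕ) (u v : V) : gdist w u v ≤ hdist w h u v := iInf_le _ h

lemma gdist_self (u : V) : gdist w u u = 0 :=
  le_antisymm ((gdist_le_hdist w 0 u u).trans (hdist_self w 0 u).le) bot_le

lemma gdist_le (u v : V) : gdist w u v ≤ w u v :=
  (gdist_le_hdist w 1 u v).trans (hdist_one_le w u v)

lemma gdist_triangle (u m v : V) : gdist w u v ≤ gdist w u m + gdist w m v := by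
  simp only [gdist, ENNReal.iInf_add, ENNReal.add_iInf]
  exact le_iInf₂ fun h₂ h₁ => (gdist_le_hdist w _ u v).trans (hdist_add_le w h₁ h₂ u m v)

lemma gdist_le_sum_Ico (g : ℕ → V) {a b : ℕ} (hab : a ≤ b) :
    gdist w (g a) (g b) ≤ ∑ j ∈ Ico a b, gdist w (g j) (g (j + 1)) := by
  induction b, hab using Nat.le_induction with
  | base => simp [gdist_self]
  | succ b hab ih =>
    rw [sum_Ico_succ_top hab]
    exact (gdist_triangle w _ (g b) _).trans (by gcongr)

variable {w}

lemma gdist_comm (hsym : ∀ u v, w u v = w v u) (u v : V) : gdist w u v = gdist w v u :=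
  iInf_congr fun h => hdist_comm hsym h u v

lemma gdist_le_hdist_of_le {W : V → V → ℝ≥0∞} (hW : ∀ a b, gdist w a b ≤ W a b) (h : ℕ)
    (u v : V) : gdist w u v ≤ hdist W h u v := by
  induction h generalizing u with
  | zero => by_cases huv : u = v <;> simp [hdist, huv, gdist_self]
  | succ h ih =>
    exact le_min (ih u) (le_iInf fun x =>
      (gdist_triangle w u x v).trans (add_le_add (hW u x) (ih x)))

end HopDistance

section Walks

variable {V : Type*} [Fintype V] [DecidableEq V] (w : V → V → ℝ≥0∞)

lemma exists_walk_sum_le_hdist (h : ℕ) (u v : V) :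
    ∃ n, ∃ f : ℕ → V, f 0 = u ∧ f n = v ∧ ∑ j ∈ range n, w (f j) (f (j + 1)) ≤ hdist w h u v := by
  induction h generalizing u with
  | zero =>
    by_cases huv : u = v
    · exact ⟨0, fun _ => u, rfl, huv, by simp⟩
    · exact ⟨1, fun j => if j = 0 then u else v, by simp, by simp, by simp [hdist, huv]⟩
  | succ h ih =>
    rcases le_total (hdist w h u v) (⨅ x, w u x + hdist w h x v) with hle | hle
    · obtain ⟨n, f, hf0, hfn, hf⟩ := ih u
      exact ⟨n, f, hf0, hfn, by rwa [hdist, min_eq_left hle]⟩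
    have : Nonempty V := ⟨u⟩
    obtain ⟨x, hx⟩ := Finite.exists_min fun x => w u x + hdist w h x v
    obtain ⟨n, f, hf0, hfn, hf⟩ := ih x
    refine ⟨n + 1, fun j => if j = 0 then u else f (j - 1), by simp, by simpa, ?_⟩
    rw [sum_range_succ', hdist, min_eq_right hle, add_comm]
    simp only [Nat.add_eq_zero_iff, one_ne_zero, and_false, if_false, if_true,
      add_tsub_cancel_right, zero_add, hf0]
    exact (add_le_add le_rfl hf).trans (le_iInf hx)

def skipIndex (a d j : ℕ) : ℕ := if j < a then j else j + d

omit [Fintype V] [DecidableEq V] in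
lemma sum_skipIndex_le (f : ℕ → V) {a b n : ℕ} (hab : a < b) (hbn : b ≤ n) (hf : f a = f b) :
    ∑ j ∈ range (n - (b - a)), w (f (skipIndex a (b - a) j)) (f (skipIndex a (b - a) (j + 1))) ≤
      ∑ j ∈ range n, w (f j) (f (j + 1)) := by
  set e := fun j => w (f j) (f (j + 1))
  have hpre : ∀ j ∈ range a,
      w (f (skipIndex a (b - a) j)) (f (skipIndex a (b - a) (j + 1))) = e j := by
    intro j hj
    have hja : j < a := mem_range.mp hj
    rcases (show j + 1 ≤ a by omega).lt_or_eq with hlt | rfl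
    · simp [skipIndex, e, hja, hlt]
    · simp [skipIndex, e, show j + 1 + (b - (j + 1)) = b by omega, hf]
  have hpost : ∀ j ∈ Ico a (n - (b - a)),
      w (f (skipIndex a (b - a) j)) (f (skipIndex a (b - a) (j + 1))) = e (j + (b - a)) := by
    intro j hj
    have haj : a ≤ j := (mem_Ico.mp hj).1
    simp [skipIndex, e, show ¬ j < a by omega, show ¬ j + 1 < a by omega,
      show j + 1 + (b - a) = j + (b - a) + 1 by omega]
  rw [← sum_range_add_sum_Ico _ (show a ≤ n - (b - a) by omega), sum_congr rfl hpre,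
    sum_congr rfl hpost, sum_Ico_add', show a + (b - a) = b by omega,
    show n - (b - a) + (b - a) = n by omega, ← sum_range_add_sum_Ico e (hab.le.trans hbn)]
  gcongr

omit [DecidableEq V] in
/-- A walk with at least `card V` steps repeats a vertex, and cutting out the loop does not
increase its cost. -/
lemma exists_short_walk (n : ℕ) (f : ℕ → V) :
    ∃ m, ∃ f' : ℕ → V, m < Fintype.card V ∧ f' 0 = f 0 ∧ f' m = f n ∧
      ∑ j ∈ range m, w (f' j) (f' (j + 1)) ≤ ∑ j ∈ range n, w (f j) (f (j + 1)) := by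
  induction n using Nat.strong_induction_on generalizing f with
  | _ n ih =>
  by_cases hn : n < Fintype.card V
  · exact ⟨n, f, hn, rfl, rfl, le_rfl⟩
  obtain ⟨i, j, hij, hfij⟩ := Fintype.exists_ne_map_eq_of_card_lt (fun i : Fin (n + 1) => f i)
    (by rw [Fintype.card_fin]; omega)
  obtain ⟨a, b, hab, hbn, hf⟩ : ∃ a b, a < b ∧ b ≤ n ∧ f a = f b := by
    rcases lt_or_gt_of_ne (Fin.val_ne_of_ne hij) with h | h
    · exact ⟨i, j, h, Nat.lt_succ_iff.mp j.2, hfij⟩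
    · exact ⟨j, i, h, Nat.lt_succ_iff.mp i.2, hfij.symm⟩
  obtain ⟨m, f', hm, hf'0, hf'n, hf'⟩ :=
    ih (n - (b - a)) (by omega) (f ∘ skipIndex a (b - a))
  refine ⟨m, f', hm, ?_, ?_, hf'.trans (sum_skipIndex_le w f hab hbn hf)⟩
  · rcases Nat.eq_zero_or_pos a with rfl | ha
    · simp [hf'0, skipIndex, hf]
    · simp [hf'0, skipIndex, ha]
  · simp [hf'n, skipIndex, show ¬ n - (b - a) < a by omega,
      show n - (b - a) + (b - a) = n by omega]

lemma exists_walk_sum_le_gdist (u v : V) :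
    ∃ n, ∃ f : ℕ → V, f 0 = u ∧ f n = v ∧ ∑ j ∈ range n, w (f j) (f (j + 1)) ≤ gdist w u v := by
  suffices hdist w (Fintype.card V) u v ≤ gdist w u v by
    obtain ⟨n, f, hf0, hfn, hf⟩ := exists_walk_sum_le_hdist w (Fintype.card V) u v
    exact ⟨n, f, hf0, hfn, hf.trans this⟩
  refine le_iInf fun h => ?_
  obtain ⟨n, f, rfl, rfl, hf⟩ := exists_walk_sum_le_hdist w h u v
  obtain ⟨m, f', hm, hf'0, hf'm, hf'⟩ := exists_short_walk w n f
  calc hdist w (Fintype.card V) (f 0) (f n) ≤ hdist w (m - 0) (f' 0) (f' m) := by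
        rw [hf'0, hf'm]; exact hdist_antitone w (by omega) _ _
    _ ≤ ∑ j ∈ range m, w (f' j) (f' (j + 1)) := by
        simpa using hdist_le_sum_Ico w f' m.zero_le
    _ ≤ hdist w h (f 0) (f n) := hf'.trans hf

end Walks

section Segmentation

variable (e : ℕ → ℝ≥0∞) (L : ℝ≥0∞)

lemma sum_range_sum_Ico_eq {t : ℕ → ℕ} (ht : Monotone t) (J : ℕ) :
    ∑ j ∈ range J, ∑ m ∈ Ico (t j) (t (j + 1)), e m = ∑ m ∈ Ico (t 0) (t J), e m := by
  induction J with
  | zero => simp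
  | succ J ih =>
    rw [sum_range_succ, ih, sum_Ico_consecutive _ (ht J.zero_le) (ht J.le_succ)]

lemma Monotone.ite_lt {t : ℕ → ℕ} (ht : Monotone t) {J m : ℕ} (hJ : ∀ j < J, t j ≤ m) :
    Monotone fun j => if j < J then t j else m := by
  intro i j hij
  dsimp only
  split_ifs with hi hj hj
  · exact ht hij
  · exact hJ i hi
  · omega
  · exact le_rfl

structure IsSegmentation (n J : ℕ) (t : ℕ → ℕ) : Prop where
  monotone : Monotone t
  zero : t 0 = 0
  last : t J = n
  light_or_step : ∀ j < J, ∑ m ∈ Ico (t j) (t (j + 1)), e m ≤ L ∨ t (j + 1) = t j + 1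
  heavy_pair : ∀ j, j + 1 < J → L < ∑ m ∈ Ico (t j) (t (j + 2)), e m

variable {e L}

lemma IsSegmentation.extend_last {n J : ℕ} {t : ℕ → ℕ} (hS : IsSegmentation e L n J t)
    (hJ : 0 < J) (hlight : ∑ m ∈ Ico (t (J - 1)) (n + 1), e m ≤ L) :
    IsSegmentation e L (n + 1) J fun j => if j < J then t j else n + 1 := by
  have hle : ∀ j < J, t j ≤ n + 1 := fun j hj => (hS.monotone hj.le).trans (hS.last ▸ n.le_succ)
  refine ⟨hS.monotone.ite_lt hle, by simp [hJ, hS.zero], by simp, fun j hj => ?_, fun j hj => ?_⟩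
  · by_cases hj' : j + 1 < J
    · simpa [hj, hj'] using hS.light_or_step j hj
    · obtain rfl : j = J - 1 := by omega
      left
      simpa [hj, show J - 1 + 1 = J by omega] using hlight
  · by_cases hj' : j + 2 < J
    · simpa [show j < J by omega, hj'] using hS.heavy_pair j hj
    · have hJ : j + 2 = J := by omega
      have := hS.heavy_pair j (by omega)
      rw [hJ, hS.last] at this
      simp only [show j < J by omega, hj', if_true, if_false]
      exact this.trans_le (sum_le_sum_of_subset (Ico_subset_Ico_right n.le_succ))

lemma IsSegmentation.snoc {n J : ℕ} {t : ℕ → ℕ} (hS : IsSegmentation e L n J t)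
    (hheavy : 0 < J → L < ∑ m ∈ Ico (t (J - 1)) (n + 1), e m) :
    IsSegmentation e L (n + 1) (J + 1) fun j => if j < J + 1 then t j else n + 1 := by
  have hle : ∀ j < J + 1, t j ≤ n + 1 :=
    fun j hj => (hS.monotone (Nat.le_of_lt_succ hj)).trans (hS.last ▸ n.le_succ)
  refine ⟨hS.monotone.ite_lt hle, by simp [hS.zero], by simp, fun j hj => ?_, fun j hj => ?_⟩
  · by_cases hj' : j + 1 ≤ J
    · simpa [show j ≤ J by omega, hj'] using hS.light_or_step j (by omega)
    · right
      simp [show j = J by omega, hS.last]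
  · by_cases hj' : j + 2 ≤ J
    · simpa [show j ≤ J by omega, hj'] using hS.heavy_pair j (by omega)
    · obtain rfl : j = J - 1 := by omega
      simpa [show J - 1 ≤ J by omega, hj'] using hheavy (by omega)

lemma IsSegmentation.half_mul_lt {n J : ℕ} {t : ℕ → ℕ} (hS : IsSegmentation e L n J t)
    (hJ : 2 ≤ J) : ((J / 2 : ℕ) : ℝ≥0∞) * L < ∑ m ∈ range n, e m := by
  have hpairs : (range (J / 2)).Nonempty := nonempty_range_iff.mpr (by omega)
  have hmono : Monotone fun s => t (2 * s) := hS.monotone.comp fun _ _ h => by omega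
  calc ((J / 2 : ℕ) : ℝ≥0∞) * L = ∑ _s ∈ range (J / 2), L := by simp
    _ < ∑ s ∈ range (J / 2), ∑ m ∈ Ico (t (2 * s)) (t (2 * (s + 1))), e m :=
      ENNReal.sum_lt_sum_of_nonempty hpairs fun s hs =>
        hS.heavy_pair (2 * s) (by rw [mem_range] at hs; omega)
    _ = ∑ m ∈ Ico (t 0) (t (2 * (J / 2))), e m := sum_range_sum_Ico_eq e hmono _
    _ ≤ ∑ m ∈ range n, e m := by
      rw [hS.zero, range_eq_Ico, ← hS.last]
      exact sum_le_sum_of_subset (Ico_subset_Ico_right (hS.monotone (by omega)))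

variable (e L)

lemma exists_isSegmentation (n : ℕ) : ∃ J t, IsSegmentation e L n J t := by
  induction n with
  | zero => exact ⟨0, fun _ => 0, monotone_const, rfl, rfl, by simp, by simp⟩
  | succ n ih =>
    obtain ⟨J, t, hS⟩ := ih
    by_cases hlight : 0 < J ∧ ∑ m ∈ Ico (t (J - 1)) (n + 1), e m ≤ L
    · exact ⟨J, _, hS.extend_last hlight.1 hlight.2⟩
    · exact ⟨J + 1, _, hS.snoc fun hJ => lt_of_not_ge fun h => hlight ⟨hJ, h⟩⟩

end Segmentation

section PathPartition

variable {V : Type*} [Fintype V] [DecidableEq V] (w : V → V → ℝ≥0∞)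

/-- Waypoints along a shortest `x`–`y` path; `c j` is the weight of the path from `g j` to
`g (j + 1)`. -/
structure IsPathPartition (L : ℝ≥0∞) (x y : V) (J : ℕ) (g : ℕ → V) (c : ℕ → ℝ≥0∞) : Prop where
  first : g 0 = x
  last : g J = y
  sum_le : ∑ j ∈ range J, c j ≤ gdist w x y
  gdist_le : ∀ j < J, gdist w (g j) (g (j + 1)) ≤ c j
  light_or_edge : ∀ j < J, c j ≤ L ∨ w (g j) (g (j + 1)) ≤ c j

lemma exists_isPathPartition (δ : ℝ≥0∞) {x y : V} (hD : gdist w x y ≠ ⊤) :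
    ∃ J g c, IsPathPartition w (δ * gdist w x y) x y J g c ∧ ((J / 2 : ℕ) : ℝ≥0∞) * δ < 1 := by
  obtain ⟨n, f, hf0, hfn, hf⟩ := exists_walk_sum_le_gdist w x y
  set e := fun j => w (f j) (f (j + 1))
  obtain ⟨J, t, hS⟩ := exists_isSegmentation e (δ * gdist w x y) n
  refine ⟨J, fun j => f (t j), fun j => ∑ m ∈ Ico (t j) (t (j + 1)), e m,
    ⟨by simp [hS.zero, hf0], by simp [hS.last, hfn], ?_, ?_, ?_⟩, ?_⟩
  · rwa [sum_range_sum_Ico_eq e hS.monotone, hS.zero, hS.last, ← range_eq_Ico]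
  · exact fun j _ => (gdist_le_hdist w _ _ _).trans (hdist_le_sum_Ico w f (hS.monotone j.le_succ))
  · intro j hj
    refine (hS.light_or_step j hj).imp id fun h => ?_
    simp [h, e]
  · rcases lt_or_ge J 2 with hJ | hJ
    · simp [Nat.div_eq_of_lt hJ]
    have hlt : ((J / 2 : ℕ) : ℝ≥0∞) * δ * gdist w x y < 1 * gdist w x y := by
      rw [mul_assoc, one_mul]
      exact (hS.half_mul_lt hJ).trans_le hf
    exact (ENNReal.mul_lt_mul_iff_left (fun h => by simp [h] at hlt) hD).mp hlt

variable {w} {W : V → V → ℝ≥0∞} {L : ℝ≥0∞} {x y : V} {J : ℕ} {g : ℕ → V} {c : ℕ → ℝ≥0∞}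
  {h : ℕ} {ρ : ℝ≥0∞}

namespace IsPathPartition

lemma sum_Ico_add_le (hP : IsPathPartition w L x y J g c) {a b : ℕ} (hab : a ≤ b) (hbJ : b ≤ J) :
    ∑ j ∈ Ico 0 a, c j + ∑ j ∈ Ico a b, c j + ∑ j ∈ Ico b J, c j ≤ gdist w x y := by
  rw [sum_Ico_consecutive _ a.zero_le hab, sum_Ico_consecutive _ (by omega) hbJ, ← range_eq_Ico]
  exact hP.sum_le

lemma gdist_le_sum_Ico (hP : IsPathPartition w L x y J g c) {a b : ℕ} (hab : a ≤ b)
    (hbJ : b ≤ J) : gdist w (g a) (g b) ≤ ∑ j ∈ Ico a b, c j :=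
  (_root_.gdist_le_sum_Ico w g hab).trans
    (sum_le_sum fun j hj => hP.gdist_le j (by rw [mem_Ico] at hj; omega))

lemma hdist_le_sum_Ico_zero (hP : IsPathPartition w L x y J g c) {a : ℕ}
    (hg : ∀ j < a, hdist W h (g j) (g (j + 1)) ≤ ρ * c j) :
    hdist W (a * h) x (g a) ≤ ρ * ∑ j ∈ Ico 0 a, c j := by
  simpa [hP.first, mul_sum] using hdist_le_sum_of_chain W g (fun j => ρ * c j) h a.zero_le
    fun j _ hj => hg j hj

lemma hdist_le_sum_Ico_last (hP : IsPathPartition w L x y J g c) {a : ℕ} (haJ : a ≤ J)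
    (hg : ∀ j, a ≤ j → j < J → hdist W h (g j) (g (j + 1)) ≤ ρ * c j) :
    hdist W ((J - a) * h) (g a) y ≤ ρ * ∑ j ∈ Ico a J, c j := by
  simpa [hP.last, mul_sum] using hdist_le_sum_of_chain W g (fun j => ρ * c j) h haJ hg

lemma hdist_le_mul_gdist (hP : IsPathPartition w L x y J g c)
    (hg : ∀ j < J, hdist W h (g j) (g (j + 1)) ≤ ρ * c j) :
    hdist W (J * h) x y ≤ ρ * gdist w x y := by
  have hchain := hP.hdist_le_sum_Ico_zero hg
  rw [hP.last, ← range_eq_Ico] at hchain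
  exact hchain.trans (by gcongr; exact hP.sum_le)

lemma le_of_lt_hdist (hP : IsPathPartition w L x y J g c) (hWw : ∀ u v, W u v ≤ w u v)
    (hh : 1 ≤ h) (hρ : 1 ≤ ρ) {j : ℕ} (hj : j < J)
    (hbad : ρ * c j < hdist W h (g j) (g (j + 1))) : c j ≤ L := by
  refine (hP.light_or_edge j hj).resolve_right fun hedge => hbad.not_ge ?_
  calc hdist W h (g j) (g (j + 1)) ≤ hdist W 1 (g j) (g (j + 1)) := hdist_antitone W hh _ _
    _ ≤ w (g j) (g (j + 1)) := (hdist_one_le W _ _).trans (hWw _ _)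
    _ ≤ ρ * c j := hedge.trans (le_mul_of_one_le_left' hρ)

end IsPathPartition

end PathPartition

lemma exists_first_last {P : ℕ → Prop} {J : ℕ} (h : ∃ j < J, P j) :
    ∃ a b, a ≤ b ∧ b < J ∧ P a ∧ P b ∧ (∀ j < a, ¬ P j) ∧ ∀ j, b < j → j < J → ¬ P j := by
  set S := (range J).filter P
  have hmem : ∀ {j}, j ∈ S ↔ j < J ∧ P j := by simp [S]
  have hS : S.Nonempty := let ⟨j, hj, hPj⟩ := h; ⟨j, hmem.mpr ⟨hj, hPj⟩⟩
  obtain ⟨-, ha⟩ := hmem.mp (S.min'_mem hS)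
  obtain ⟨hbJ, hb⟩ := hmem.mp (S.max'_mem hS)
  have hab := S.min'_le _ (S.max'_mem hS)
  refine ⟨S.min' hS, S.max' hS, hab, hbJ, ha, hb,
    fun j hj hPj => ?_, fun j hj hjJ hPj => ?_⟩
  · exact absurd (S.min'_le j (hmem.mpr ⟨by omega, hPj⟩)) (by omega)
  · exact absurd (S.le_max' j (hmem.mpr ⟨hjJ, hPj⟩)) (by omega)

section DetourArithmetic

variable {ρ δ P M S D a b : ℝ≥0∞}

lemma mul_add_add_mul_le (hρ : 1 ≤ ρ) (hsum : P + M + S ≤ D) : ρ * P + M + ρ * S ≤ ρ * D :=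
  calc ρ * P + M + ρ * S ≤ ρ * P + ρ * M + ρ * S := by gcongr; exact le_mul_of_one_le_left' hρ
    _ = ρ * (P + M + S) := by ring
    _ ≤ ρ * D := by gcongr

lemma detour_le_of_edge {ρ' : ℝ≥0∞} (hρ : 1 ≤ ρ) (hρ' : ρ + 8 * δ ≤ ρ') (hsum : P + M + S ≤ D)
    (ha : a ≤ δ * D) (hb : b ≤ δ * D) :
    ρ * P + 2 * a + (2 * a + M + 2 * b) + 2 * b + ρ * S ≤ ρ' * D :=
  calc ρ * P + 2 * a + (2 * a + M + 2 * b) + 2 * b + ρ * S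
        = (ρ * P + M + ρ * S) + 4 * (a + b) := by ring
    _ ≤ ρ * D + 4 * (δ * D + δ * D) := by gcongr; exact mul_add_add_mul_le hρ hsum
    _ = (ρ + 8 * δ) * D := by ring
    _ ≤ ρ' * D := by gcongr

lemma detour_le_of_pivot (hρ : 1 ≤ ρ) (hρ2 : ρ + 6 * δ ≤ 2) (hsum : P + M + S ≤ D)
    (ha : a ≤ δ * D) (hb : b ≤ δ * D) : ρ * P + 2 * a + (2 * a + M + 2 * b) ≤ 2 * D :=
  calc ρ * P + 2 * a + (2 * a + M + 2 * b) = (ρ * P + M + ρ * 0) + (4 * a + 2 * b) := by ring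
    _ ≤ ρ * D + (4 * (δ * D) + 2 * (δ * D)) := by
      gcongr
      exact mul_add_add_mul_le hρ ((add_zero _).trans_le (le_self_add.trans hsum))
    _ = (ρ + 6 * δ) * D := by ring
    _ ≤ 2 * D := by gcongr

end DetourArithmetic

section Stretch

variable {V : Type*} [Fintype V] [DecidableEq V] {w W : V → V → ℝ≥0∞}

/-- Alternatives (1) and (2) of the lemma for the pair `x, y`, with hop bound `h`, stretch `ρ` and
the next level `B = A (i + 1)`. -/
def ApproxOrReaches (w W : V → V → ℝ≥0∞) (h : ℕ) (ρ : ℝ≥0∞) (B : Set V) (x y : V) : Prop :=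
  hdist W h x y ≤ ρ * gdist w x y ∨ ∃ z ∈ B, hdist W h x z ≤ 2 * gdist w x y

lemma ApproxOrReaches.exists_of_lt {h : ℕ} {ρ c : ℝ≥0∞} {B : Set V} {u v : V}
    (H : ApproxOrReaches w W h ρ B u v) (hc : gdist w u v ≤ c) (hbad : ρ * c < hdist W h u v) :
    ∃ z ∈ B, hdist W h u z ≤ 2 * c := by
  obtain ⟨z, hz, hzu⟩ := H.resolve_left fun H => (H.trans (by gcongr)).not_gt hbad
  exact ⟨z, hz, hzu.trans (by gcongr)⟩

theorem approxOrReaches_of_isPathPartition (hsym : ∀ u v, w u v = w v u)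
    (hWsymm : ∀ u v, W u v = W v u) (hWw : ∀ u v, W u v ≤ w u v)
    (hgW : ∀ u v, gdist w u v ≤ W u v) {h h' : ℕ} {ρ ρ' δ : ℝ≥0∞} {B B' : Set V}
    (hh : 1 ≤ h) (hρ : 1 ≤ ρ) (hρ' : ρ + 8 * δ ≤ ρ') (hρ2 : ρ + 6 * δ ≤ 2)
    (IH : ∀ u v, ApproxOrReaches w W h ρ B u v)
    (hedge : ∀ u ∈ B, ∀ v ∈ B,
      hdist W 1 u v ≤ gdist w u v ∨ ∃ z ∈ B', hdist W 1 u z ≤ gdist w u v)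
    {x y : V} {J : ℕ} {g : ℕ → V} {c : ℕ → ℝ≥0∞}
    (hP : IsPathPartition w (δ * gdist w x y) x y J g c) (hJ : (J + 2) * h ≤ h') :
    ApproxOrReaches w W h' ρ' B' x y := by
  by_cases hall : ∀ j < J, hdist W h (g j) (g (j + 1)) ≤ ρ * c j
  · left
    calc hdist W h' x y ≤ hdist W (J * h) x y := hdist_antitone W (by nlinarith) _ _
      _ ≤ ρ * gdist w x y := hP.hdist_le_mul_gdist hall
      _ ≤ ρ' * gdist w x y := by gcongr; exact le_self_add.trans hρ'
  push Not at hall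
  obtain ⟨a, b, hab, hbJ, ha, hb, hpre, hsuf⟩ := exists_first_last hall
  obtain ⟨z₁, hz₁B, hz₁⟩ := (IH (g a) (g (a + 1))).exists_of_lt (hP.gdist_le a (by omega)) ha
  obtain ⟨z₂, hz₂B, hz₂⟩ := (IH (g (b + 1)) (g b)).exists_of_lt (c := c b)
    (by rw [gdist_comm hsym]; exact hP.gdist_le b hbJ) (by rwa [hdist_comm hWsymm])
  have hxa := hP.hdist_le_sum_Ico_zero fun j hj => not_lt.mp (hpre j hj)
  have hby := hP.hdist_le_sum_Ico_last hbJ fun j hj hjJ => not_lt.mp (hsuf j hj hjJ)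
  have hz₁₂ : gdist w z₁ z₂ ≤ 2 * c a + ∑ j ∈ Ico a (b + 1), c j + 2 * c b := by
    calc gdist w z₁ z₂ ≤ gdist w z₁ (g a) + gdist w (g a) (g (b + 1)) + gdist w (g (b + 1)) z₂ :=
          (gdist_triangle w _ _ _).trans (add_le_add_left (gdist_triangle w _ _ _) _)
      _ ≤ _ := by
        gcongr
        · rw [gdist_comm hsym]; exact (gdist_le_hdist_of_le hgW h _ _).trans hz₁
        · exact hP.gdist_le_sum_Ico (by omega) hbJ
        · exact (gdist_le_hdist_of_le hgW h _ _).trans hz₂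
  have hsum := hP.sum_Ico_add_le (show a ≤ b + 1 by omega) hbJ
  have hca := hP.le_of_lt_hdist hWw hh hρ (by omega) ha
  have hcb := hP.le_of_lt_hdist hWw hh hρ hbJ hb
  rcases hedge z₁ hz₁B z₂ hz₂B with hz | ⟨z, hzB, hz⟩
  · left
    rw [hdist_comm hWsymm] at hz₂
    have hhops : (a + (J - (b + 1)) + 1) * h ≤ J * h := Nat.mul_le_mul_right _ (by omega)
    calc hdist W h' x y ≤ hdist W (a * h + h + 1 + h + (J - (b + 1)) * h) x y :=
          hdist_antitone W (by nlinarith) _ _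
      _ ≤ _ := hdist_add_le_of_le (hdist_add_le_of_le (hdist_add_le_of_le
          (hdist_add_le_of_le hxa hz₁) (hz.trans hz₁₂)) hz₂) hby
      _ ≤ ρ' * gdist w x y := detour_le_of_edge hρ hρ' hsum hca hcb
  · refine Or.inr ⟨z, hzB, ?_⟩
    calc hdist W h' x z ≤ hdist W (a * h + h + 1) x z := hdist_antitone W (by nlinarith) _ _
      _ ≤ _ := hdist_add_le_of_le (hdist_add_le_of_le hxa hz₁) (hz.trans hz₁₂)
      _ ≤ 2 * gdist w x y := detour_le_of_pivot hρ hρ2 hsum hca hcb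

theorem approxOrReaches_succ (hsym : ∀ u v, w u v = w v u)
    (hWsymm : ∀ u v, W u v = W v u) (hWw : ∀ u v, W u v ≤ w u v)
    (hgW : ∀ u v, gdist w u v ≤ W u v) {h h' : ℕ} {ρ ρ' δ : ℝ≥0∞} {B B' : Set V}
    (hh : 1 ≤ h) (hρ : 1 ≤ ρ) (hρ' : ρ + 8 * δ ≤ ρ') (hρ2 : ρ + 6 * δ ≤ 2)
    (hhop : ∀ J : ℕ, ((J / 2 : ℕ) : ℝ≥0∞) * δ < 1 → (J + 2) * h ≤ h')
    (IH : ∀ u v, ApproxOrReaches w W h ρ B u v)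
    (hedge : ∀ u ∈ B, ∀ v ∈ B,
      hdist W 1 u v ≤ gdist w u v ∨ ∃ z ∈ B', hdist W 1 u z ≤ gdist w u v)
    (x y : V) : ApproxOrReaches w W h' ρ' B' x y := by
  by_cases hD : gdist w x y = ⊤
  · left
    rw [hD, ENNReal.mul_top (one_pos.trans_le (hρ.trans (le_self_add.trans hρ'))).ne']
    exact le_top
  obtain ⟨J, g, c, hP, hJ⟩ := exists_isPathPartition w δ hD
  exact approxOrReaches_of_isPathPartition hsym hWsymm hWw hgW hh hρ hρ' hρ2 IH hedge hP
    (hhop J hJ)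

end Stretch

section UnionWeight

variable {V : Type*} {w H : V → V → ℝ≥0∞}

/-- The weights of `G ∪ H`, where the hopset `H` is read as undirected. -/
noncomputable def unionWeight (w H : V → V → ℝ≥0∞) (u v : V) : ℝ≥0∞ :=
  min (w u v) (min (H u v) (H v u))

lemma unionWeight_comm (hsym : ∀ u v, w u v = w v u) (u v : V) :
    unionWeight w H u v = unionWeight w H v u := by
  rw [unionWeight, unionWeight, hsym, min_comm (H u v)]

lemma unionWeight_le (u v : V) : unionWeight w H u v ≤ w u v := min_le_left _ _

end UnionWeight

section Hopset

variable {V : Type*} [Fintype V] [DecidableEq V]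

/-- The hopset `H` of the statement: for `u ∈ A i \ A (i + 1)`, an edge of weight `d(u, v)` to
every `v` in the bunch of `u` and to its pivot `p i u`; `⊤` stands for "no edge". -/
noncomputable def hopset (w : V → V → ℝ≥0∞) (k : ℕ) (A : ℕ → Finset V) (p : ℕ → V → V)
    (u v : V) : ℝ≥0∞ :=
  if ∃ i < k, u ∈ A i ∧ u ∉ A (i + 1) ∧
      ((v ∈ A i ∧ gdist w u v < ⨅ a ∈ A (i + 1), gdist w u a) ∨
        ((A (i + 1)).Nonempty ∧ v = p i u))
    then gdist w u v else ⊤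

variable {w H : V → V → ℝ≥0∞}

lemma gdist_le_unionWeight (hsym : ∀ u v, w u v = w v u) (hH : ∀ u v, gdist w u v ≤ H u v)
    (u v : V) : gdist w u v ≤ unionWeight w H u v :=
  le_min (gdist_le w u v) (le_min (hH u v) (gdist_comm hsym u v ▸ hH v u))

variable {k : ℕ} {A : ℕ → Finset V} {p : ℕ → V → V}

lemma gdist_le_hopset (u v : V) : gdist w u v ≤ hopset w k A p u v := by
  unfold hopset
  split_ifs <;> simp

lemma hdist_one_le_of_hopset_eq {u v : V} (huv : hopset w k A p u v = gdist w u v) :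
    hdist (unionWeight w (hopset w k A p)) 1 u v ≤ gdist w u v :=
  (hdist_one_le _ u v).trans ((min_le_right _ _).trans ((min_le_left _ _).trans huv.le))

lemma hdist_one_le_or_exists_pivot
    (hp : ∀ i u, u ∈ A i → u ∉ A (i + 1) → (A (i + 1)).Nonempty →
      p i u ∈ A (i + 1) ∧ ∀ a ∈ A (i + 1), gdist w u (p i u) ≤ gdist w u a)
    {j : ℕ} (hj : j < k) {u v : V} (hu : u ∈ A j) (hv : v ∈ A j) :
    hdist (unionWeight w (hopset w k A p)) 1 u v ≤ gdist w u v ∨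
      ∃ z ∈ A (j + 1), hdist (unionWeight w (hopset w k A p)) 1 u z ≤ gdist w u v := by
  by_cases hu' : u ∈ A (j + 1)
  · exact Or.inr ⟨u, hu', by simp [hdist_self]⟩
  by_cases hbunch : gdist w u v < ⨅ a ∈ A (j + 1), gdist w u a
  · exact Or.inl (hdist_one_le_of_hopset_eq (if_pos ⟨j, hj, hu, hu', Or.inl ⟨hv, hbunch⟩⟩))
  rcases (A (j + 1)).eq_empty_or_nonempty with hempty | hne
  · -- the infimum over `∅` is `⊤`, hence `d(u, v) = ⊤`
    left
    simp_all
  obtain ⟨hpA, hpmin⟩ := hp j u hu hu' hne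
  refine Or.inr ⟨p j u, hpA, (hdist_one_le_of_hopset_eq ?_).trans ?_⟩
  · exact if_pos ⟨j, hj, hu, hu', Or.inr ⟨hne, rfl⟩⟩
  · exact (le_iInf₂ hpmin).trans (not_lt.mp hbunch)

end Hopset

lemma mul_ceil_pow_le {s : ℝ} {N : ℕ} (hN : (N : ℝ) + 1 ≤ s) (i : ℕ) :
    N * ⌈s ^ i⌉₊ ≤ ⌈s ^ (i + 1)⌉₊ := by
  suffices (N : ℝ) * ⌈s ^ i⌉₊ ≤ s ^ (i + 1) by exact_mod_cast this.trans (Nat.le_ceil _)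
  have hs : 1 ≤ s := by linarith [N.cast_nonneg (α := ℝ)]
  rcases i with _ | i
  · simp only [pow_zero, Nat.ceil_one, Nat.cast_one, mul_one, zero_add, pow_one]
    linarith
  have hceil : (⌈s ^ (i + 1)⌉₊ : ℝ) ≤ s ^ (i + 1) + 1 := (Nat.ceil_lt_add_one (by positivity)).le
  have hsi : s ≤ s ^ (i + 1) := le_self_pow₀ hs (by omega)
  calc (N : ℝ) * ⌈s ^ (i + 1)⌉₊ ≤ (s - 1) * (s ^ (i + 1) + 1) := by gcongr; linarith
    _ ≤ s ^ (i + 1 + 1) := by rw [pow_succ _ (i + 1)]; nlinarith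

lemma add_two_mul_ceil_pow_le {δ : ℝ} (hδ0 : 0 < δ) (hδ : δ ≤ 1 / 8) (i J : ℕ)
    (hJ : ((J / 2 : ℕ) : ℝ≥0∞) * ENNReal.ofReal δ < 1) :
    (J + 2) * ⌈(3 / δ) ^ i⌉₊ ≤ ⌈(3 / δ) ^ (i + 1)⌉₊ := by
  rw [← ENNReal.ofReal_natCast, ← ENNReal.ofReal_mul (Nat.cast_nonneg _),
    ENNReal.ofReal_lt_one] at hJ
  have h8 : 8 ≤ 1 / δ := by rw [le_div_iff₀ hδ0]; linarith
  have hm : ((J / 2 : ℕ) : ℝ) < 1 / δ := by rw [lt_div_iff₀ hδ0]; exact hJ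
  have hJm : (J : ℝ) ≤ 2 * ((J / 2 : ℕ) : ℝ) + 1 := by
    exact_mod_cast (by omega : J ≤ 2 * (J / 2) + 1)
  apply mul_ceil_pow_le
  rw [show 3 / δ = 3 * (1 / δ) by ring]
  push_cast
  linarith

lemma ofReal_add_mul_ofReal_le {a b c : ℝ} (ha : 0 ≤ a) (hb : 0 ≤ b) (n : ℕ)
    (h : a + n * b ≤ c) : ENNReal.ofReal a + n * ENNReal.ofReal b ≤ ENNReal.ofReal c := by
  rw [← ENNReal.ofReal_natCast, ← ENNReal.ofReal_mul (Nat.cast_nonneg _),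
    ← ENNReal.ofReal_add ha (by positivity)]
  exact ENNReal.ofReal_le_ofReal h

theorem approxOrReaches_hopset {V : Type*} [Fintype V] [DecidableEq V] {w : V → V → ℝ≥0∞}
    (hsym : ∀ u v, w u v = w v u) {k : ℕ} {δ : ℝ} (hδ0 : 0 < δ) (hδk : 8 * δ * k ≤ 1)
    {A : ℕ → Finset V} (hA0 : A 0 = univ) {p : ℕ → V → V}
    (hp : ∀ i u, u ∈ A i → u ∉ A (i + 1) → (A (i + 1)).Nonempty →
      p i u ∈ A (i + 1) ∧ ∀ a ∈ A (i + 1), gdist w u (p i u) ≤ gdist w u a) :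
    ∀ i < k, ∀ x y, ApproxOrReaches w (unionWeight w (hopset w k A p)) ⌈(3 / δ) ^ i⌉₊
      (ENNReal.ofReal (1 + 8 * δ * i)) (A (i + 1) : Set V) x y := by
  intro i
  induction i with
  | zero =>
    intro hk x y
    rcases hdist_one_le_or_exists_pivot hp hk (hA0 ▸ mem_univ x) (hA0 ▸ mem_univ y)
      with hxy | ⟨z, hz, hxz⟩
    · left; simpa using hxy
    · right; exact ⟨z, hz, by simpa using hxz.trans (le_mul_of_one_le_left' one_le_two)⟩
  | succ i ih =>
    intro hik
    have hi : 8 * δ * (i + 1) ≤ 1 :=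
      (mul_le_mul_of_nonneg_left (by exact_mod_cast hik.le) (by positivity)).trans hδk
    have hδ8 : δ ≤ 1 / 8 := by nlinarith [(i.cast_nonneg : (0 : ℝ) ≤ i)]
    refine approxOrReaches_succ hsym (unionWeight_comm hsym) unionWeight_le
      (gdist_le_unionWeight hsym gdist_le_hopset) (Nat.one_le_ceil_iff.mpr (by positivity))
      ?_ ?_ ?_ (add_two_mul_ceil_pow_le hδ0 hδ8 i) (ih (by omega))
      fun u hu v hv => hdist_one_le_or_exists_pivot hp hik hu hv
    · exact ENNReal.one_le_ofReal.mpr (le_add_of_nonneg_right (by positivity))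
    · exact_mod_cast ofReal_add_mul_ofReal_le (by positivity) hδ0.le 8 (by push_cast; linarith)
    · simpa using
        ofReal_add_mul_ofReal_le (c := 2) (by positivity) hδ0.le 6 (by push_cast; linarith)

theorem stmt_16_general {V : Type*} [Fintype V] [DecidableEq V]
    (w : V → V → ℝ≥0∞) (hsym : ∀ u v, w u v = w v u)
    (k : ℕ) (hk : 1 ≤ k) (δ : ℝ) (hδ0 : 0 < δ) (hδ1 : δ ≤ 1 / (8 * k))
    (A : ℕ → Finset V) (hA0 : A 0 = Finset.univ) (hAk : A k = ∅)
    (p : ℕ → V → V)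
    (hp : ∀ i u, u ∈ A i → u ∉ A (i + 1) → (A (i + 1)).Nonempty →
      p i u ∈ A (i + 1) ∧ ∀ a ∈ A (i + 1), gdist w u (p i u) ≤ gdist w u a)
    (H : V → V → ℝ≥0∞)
    (hH : H = fun u v =>
      if ∃ i < k, u ∈ A i ∧ u ∉ A (i + 1) ∧
          ((v ∈ A i ∧ gdist w u v < ⨅ a ∈ A (i + 1), gdist w u a) ∨
            ((A (i + 1)).Nonempty ∧ v = p i u))
        then gdist w u v else ⊤) :
    (∀ x y : V, ∀ i < k,
        hdist (fun a b => min (w a b) (min (H a b) (H b a))) ⌈(3 / δ) ^ i⌉₊ x y ≤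
          ENNReal.ofReal (1 + 8 * δ * i) * gdist w x y ∨
        ∃ z ∈ A (i + 1),
          hdist (fun a b => min (w a b) (min (H a b) (H b a))) ⌈(3 / δ) ^ i⌉₊ x z ≤
            2 * gdist w x y) ∧
    ∀ x y : V,
      hdist (fun a b => min (w a b) (min (H a b) (H b a))) ⌈(3 / δ) ^ (k - 1)⌉₊ x y ≤
        ENNReal.ofReal (1 + 8 * δ * ((k : ℝ) - 1)) * gdist w x y := by
  subst hH
  have hδk : 8 * δ * k ≤ 1 := by
    rw [le_div_iff₀ (by positivity)] at hδ1
    linarith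
  have hmain := approxOrReaches_hopset hsym hδ0 hδk hA0 hp
  refine ⟨fun x y i hi => hmain i hi x y, fun x y => ?_⟩
  rcases hmain (k - 1) (by omega) x y with hxy | ⟨z, hz, -⟩
  · rwa [Nat.cast_sub hk, Nat.cast_one] at hxy
  · rw [Nat.sub_add_cancel hk, hAk] at hz
    simp at hz

/-- Static hopset stretch/hopbound lemma for the Thorup–Zwick/Elkin–Neiman hopset built
from bunches and pivots over nested sets `V = A 0 ⊇ A 1 ⊇ ⋯ ⊇ A k = ∅`. -/
theorem stmt_16 {V : Type*} [Fintype V] [DecidableEq V]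
    (w : V → V → ℝ≥0∞) (hsym : ∀ u v, w u v = w v u)
    (k : ℕ) (hk : 1 ≤ k) (δ : ℝ) (hδ0 : 0 < δ) (hδ1 : δ ≤ 1 / (8 * k))
    (A : ℕ → Finset V) (hA0 : A 0 = Finset.univ) (hAk : A k = ∅)
    (hnest : ∀ i, A (i + 1) ⊆ A i)
    (p : ℕ → V → V)
    (hp : ∀ i u, u ∈ A i → u ∉ A (i + 1) → (A (i + 1)).Nonempty →
      p i u ∈ A (i + 1) ∧ ∀ a ∈ A (i + 1), gdist w u (p i u) ≤ gdist w u a)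
    (H : V → V → ℝ≥0∞)
    (hH : H = fun u v =>
      if ∃ i < k, u ∈ A i ∧ u ∉ A (i + 1) ∧
          ((v ∈ A i ∧ gdist w u v < ⨅ a ∈ A (i + 1), gdist w u a) ∨
            ((A (i + 1)).Nonempty ∧ v = p i u))
        then gdist w u v else ⊤) :
    (∀ x y : V, ∀ i < k,
        hdist (fun a b => min (w a b) (min (H a b) (H b a))) ⌈(3 / δ) ^ i⌉₊ x y ≤
          ENNReal.ofReal (1 + 8 * δ * i) * gdist w x y ∨
        ∃ z ∈ A (i + 1),
          hdist (fun a b => min (w a b) (min (H a b) (H b a))) ⌈(3 / δ) ^ i⌉₊ x z ≤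
            2 * gdist w x y) ∧
    ∀ x y : V,
      hdist (fun a b => min (w a b) (min (H a b) (H b a))) ⌈(3 / δ) ^ (k - 1)⌉₊ x y ≤
        ENNReal.ofReal (1 + 8 * δ * ((k : ℝ) - 1)) * gdist w x y :=
  stmt_16_general w hsym k hk δ hδ0 hδ1 A hA0 hAk p hp H hH
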